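/- arXiv:1701.08046 — 2 statements merged into one kernel-verified Lean document; each statement's English description precedes it below -/
import Mathlib

section
/- Let B generate a C_0-semigroup on a Banach space X with ‖e^{tB}‖ ≤ N for all t ≥ 0, and let q ≥ 1 with coefficients h_k^q = C(2q-1,k)C(k-1,k-q)(-1)^{k-q}. Then there exists a constant C(q,N), depending only on q and N, such that for all v ∈ 𝒟(B^q): ‖v - Σ_{k=q}^{2q-1} h_k^q (1-B)^{-k} v‖ ≤ C(q,N) ‖B^q v‖. -/
open Filter Topology MeasureTheory

/-- A (bounded) strongly continuous one-parameter semigroup on `X` with bound `N`. -/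
structure IsC0Semigroup {X : Type*} [NormedAddCommGroup X] [NormedSpace ℂ X]
    (T : ℝ → X →L[ℂ] X) (N : ℝ) : Prop where
  map_zero : T 0 = 1
  map_add : ∀ s t : ℝ, 0 ≤ s → 0 ≤ t → T (s + t) = (T s).comp (T t)
  strong_cont : ∀ x : X, ContinuousOn (fun t => T t x) (Set.Ici 0)
  norm_bound : ∀ t : ℝ, 0 ≤ t → ‖T t‖ ≤ N

/-- `A` (a linear extension of) the generator of the semigroup `T`, with domain `dom`. -/
structure IsGeneratorOf {X : Type*} [NormedAddCommGroup X] [NormedSpace ℂ X]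
    (A : X →ₗ[ℂ] X) (dom : Set X) (T : ℝ → X →L[ℂ] X) : Prop where
  deriv_mem : ∀ x ∈ dom,
    Tendsto (fun t : ℝ => (t : ℂ)⁻¹ • (T t x - x)) (𝓝[>] 0) (𝓝 (A x))
  mem_of_deriv : ∀ x y : X,
    Tendsto (fun t : ℝ => (t : ℂ)⁻¹ • (T t x - x)) (𝓝[>] 0) (𝓝 y) → x ∈ dom

/-- `R = (μ - A)⁻¹` : the resolvent of `A` at `μ`. -/
def IsResolventOf {X : Type*} [NormedAddCommGroup X] [NormedSpace ℂ X]
    (R : X →L[ℂ] X) (μ : ℂ) (A : X →ₗ[ℂ] X) (dom : Set X) : Prop :=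
  (∀ x : X, R x ∈ dom ∧ μ • R x - A (R x) = x) ∧
  (∀ x ∈ dom, R (μ • x - A x) = x)

/-- The coefficients `h_k^q = C(2q-1,k) C(k-1,k-q) (-1)^{k-q}`. -/
noncomputable def hCoef (q k : ℕ) : ℂ :=
  ((2 * q - 1).choose k : ℂ) * ((k - 1).choose (k - q) : ℂ) * (-1) ^ (k - q)

/-!
Write `n = 2q - 1`. In the binomial expansion `1 = (x + (1 - x))^n`, the terms with `ν ≥ q`
add up to `∑ h_k^q x^k` (the coefficient of `x^k` is an alternating partial sum of binomial
coefficients), while the terms with `ν < q` all carry the factor `(1 - x)^q`. Hence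
`1 - ∑ h_k^q X^k = (X - 1)^q Q` for a polynomial `Q`. With `R = (1 - B)⁻¹` we have
`(R - 1) v = R B v` on the domain, so `v - ∑ h_k^q R^k v = Q(R) R^q B^q v`.

It remains to bound `‖R‖` in terms of `N` alone. Since `ψ(s) = e^{-s} T(s) R x` has derivative
`-e^{-s} T(s) x`, the mean value inequality gives `‖R x‖ ≤ N s ‖x‖ + N e^{-s} ‖R x‖`, and
`s = log (2N + 2)` yields `‖R‖ ≤ 2 N log (2N + 2)`.
-/

open Finset Polynomial

section Binomial

theorem sum_Icc_neg_one_pow_mul_choose {q k : ℕ} (hqk : q ≤ k) :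
    ∑ ν ∈ Icc q k, (-1 : ℤ) ^ (k - ν) * k.choose ν = (-1) ^ (k - q) * (k - 1).choose (k - q) := by
  obtain _ | m := k
  · obtain rfl : q = 0 := by omega
    simp
  have hreflect : ∑ ν ∈ Icc q (m + 1), (-1 : ℤ) ^ (m + 1 - ν) * (m + 1).choose ν =
      ∑ i ∈ range (m + 1 - q + 1), (-1 : ℤ) ^ i * (m + 1).choose i := by
    refine sum_nbij' (fun ν => m + 1 - ν) (fun i => m + 1 - i) ?_ ?_ ?_ ?_ ?_
    all_goals intro i hi
    all_goals simp only [mem_Icc, mem_range] at hi ⊢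
    any_goals omega
    rw [← Nat.choose_symm (by omega)]
  rw [hreflect, Int.alternating_sum_range_choose_eq_choose]
  rfl

variable {R : Type*} [CommRing R]

theorem pow_mul_one_sub_pow_eq_sum_Icc (x : R) {n ν : ℕ} (hν : ν ≤ n) :
    x ^ ν * (1 - x) ^ (n - ν) * n.choose ν =
      ∑ k ∈ Icc ν n, (-1) ^ (k - ν) * (k.choose ν : R) * n.choose k * x ^ k := by
  rw [← Ico_add_one_right_eq_Icc, sum_Ico_eq_sum_range, show n + 1 - ν = n - ν + 1 by omega,
    sub_eq_neg_add, add_pow, mul_sum, sum_mul]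
  refine sum_congr rfl fun j _ => ?_
  have hchoose : (n.choose (ν + j) * (ν + j).choose ν : R) = n.choose ν * (n - ν).choose j := by
    rw [← Nat.cast_mul, ← Nat.cast_mul, Nat.choose_mul (Nat.le_add_right ν j),
      Nat.add_sub_cancel_left]
  rw [Nat.add_sub_cancel_left, neg_pow, one_pow, mul_one, pow_add]
  linear_combination (-(-1) ^ j * x ^ ν * x ^ j) * hchoose

theorem sum_Icc_pow_mul_one_sub_pow (x : R) (q n : ℕ) :
    ∑ ν ∈ Icc q n, x ^ ν * (1 - x) ^ (n - ν) * n.choose ν =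
      ∑ k ∈ Icc q n, (n.choose k : R) * ((k - 1).choose (k - q) : R) * (-1) ^ (k - q) * x ^ k := by
  calc _ = ∑ ν ∈ Icc q n, ∑ k ∈ Icc ν n, (-1) ^ (k - ν) * (k.choose ν : R) * n.choose k * x ^ k :=
        sum_congr rfl fun ν hν => pow_mul_one_sub_pow_eq_sum_Icc x (mem_Icc.1 hν).2
    _ = ∑ k ∈ Icc q n, ∑ ν ∈ Icc q k, (-1) ^ (k - ν) * (k.choose ν : R) * n.choose k * x ^ k :=
        sum_comm' fun ν k => by simp only [mem_Icc]; omega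
    _ = _ := by
      refine sum_congr rfl fun k hk => ?_
      have halt := congrArg (Int.cast : ℤ → R)
        (sum_Icc_neg_one_pow_mul_choose (mem_Icc.1 hk).1)
      push_cast at halt
      rw [← sum_mul, ← sum_mul, halt]
      ring

theorem sub_one_pow_dvd_one_sub_sum (x : R) (q : ℕ) :
    (x - 1) ^ q ∣ 1 - ∑ k ∈ Icc q (2 * q - 1),
      ((2 * q - 1).choose k : R) * ((k - 1).choose (k - q) : R) * (-1) ^ (k - q) * x ^ k := by
  set n := 2 * q - 1
  have hbinom : 1 - ∑ ν ∈ Icc q n, x ^ ν * (1 - x) ^ (n - ν) * n.choose ν =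
      ∑ ν ∈ range q, x ^ ν * (1 - x) ^ (n - ν) * n.choose ν := by
    rw [sub_eq_iff_eq_add, ← Ico_add_one_right_eq_Icc, sum_range_add_sum_Ico _ (by omega),
      ← add_pow, add_sub_cancel, one_pow]
  rw [← sum_Icc_pow_mul_one_sub_pow, hbinom]
  refine dvd_sum fun ν hνq => Dvd.dvd.mul_right (Dvd.dvd.mul_left ?_ _) _
  have hν : q ≤ n - ν := by simp only [mem_range] at hνq; omega
  exact (pow_dvd_pow_of_dvd ⟨-1, by ring⟩ q).trans (pow_dvd_pow _ hν)

end Binomial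

theorem sub_one_pow_dvd_one_sub_sum_hCoef (q : ℕ) :
    (X - 1 : ℂ[X]) ^ q ∣ 1 - ∑ k ∈ Icc q (2 * q - 1), hCoef q k • X ^ k := by
  convert sub_one_pow_dvd_one_sub_sum (X : ℂ[X]) q using 4 with k
  simp [hCoef, smul_eq_C_mul]

section PolynomialCalculus

variable {𝕜 E : Type*} [NontriviallyNormedField 𝕜] [NormedAddCommGroup E] [NormedSpace 𝕜 E]

theorem ContinuousLinearMap.norm_pow_le_of_norm_le {f : E →L[𝕜] E} {M : ℝ} (hf : ‖f‖ ≤ M)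
    (j : ℕ) : ‖f ^ j‖ ≤ M ^ j := by
  rcases j.eq_zero_or_pos with rfl | hj
  · rw [pow_zero, pow_zero]
    exact ContinuousLinearMap.norm_id_le
  · exact (norm_pow_le' f hj).trans (pow_le_pow_left₀ (norm_nonneg f) hf j)

theorem ContinuousLinearMap.norm_aeval_le {f : E →L[𝕜] E} {M : ℝ} (hf : ‖f‖ ≤ M) (p : 𝕜[X]) :
    ‖aeval f p‖ ≤ ∑ j ∈ range (p.natDegree + 1), ‖p.coeff j‖ * M ^ j := by
  rw [aeval_eq_sum_range]
  refine (norm_sum_le _ _).trans (sum_le_sum fun j _ => ?_)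
  rw [norm_smul]
  gcongr
  exact norm_pow_le_of_norm_le hf j

end PolynomialCalculus

section Semigroup

variable {X : Type*} [NormedAddCommGroup X] [NormedSpace ℂ X]
  {T : ℝ → X →L[ℂ] X} {N : ℝ} {B : X →ₗ[ℂ] X} {dom : Set X} {R : X →L[ℂ] X}

theorem IsC0Semigroup.bound_nonneg (hT : IsC0Semigroup T N) : 0 ≤ N :=
  (norm_nonneg _).trans (hT.norm_bound 0 le_rfl)

theorem IsC0Semigroup.norm_apply_le (hT : IsC0Semigroup T N) {t : ℝ} (ht : 0 ≤ t) (x : X) :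
    ‖T t x‖ ≤ N * ‖x‖ :=
  (T t).le_of_opNorm_le (hT.norm_bound t ht) x

theorem IsGeneratorOf.hasDerivWithinAt_orbit (hT : IsC0Semigroup T N) (hG : IsGeneratorOf B dom T)
    {y : X} (hy : y ∈ dom) {s : ℝ} (hs : 0 ≤ s) :
    HasDerivWithinAt (fun t => T t y) (T s (B y)) (Set.Ici s) s := by
  rw [← hasDerivWithinAt_Ioi_iff_Ici, hasDerivWithinAt_iff_tendsto_slope,
    Set.sdiff_singleton_eq_self (Set.notMem_Ioi.mpr le_rfl)]
  have hshift : Tendsto (fun t : ℝ => t - s) (𝓝[>] s) (𝓝[>] 0) := by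
    refine tendsto_nhdsWithin_of_tendsto_nhds_of_eventually_within _ ?_ ?_
    · simpa using ((continuous_sub_right s).tendsto s).mono_left nhdsWithin_le_nhds
    · filter_upwards [self_mem_nhdsWithin] with t (ht : s < t)
      exact sub_pos.2 ht
  refine (((T s).continuous.tendsto _).comp ((hG.deriv_mem y hy).comp hshift)).congr' ?_
  filter_upwards [self_mem_nhdsWithin] with t (ht : s < t)
  have hsplit : T t y = T s (T (t - s) y) := by
    rw [← ContinuousLinearMap.comp_apply, ← hT.map_add s (t - s) hs (by linarith), add_sub_cancel]
  simp only [Function.comp_apply]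
  rw [_root_.map_smul, ← Complex.ofReal_inv, Complex.coe_smul, slope_def_module, hsplit, map_sub]

namespace IsResolventOf

theorem map_apply (hR : IsResolventOf R 1 B dom) (x : X) : B (R x) = R x - x :=
  eq_sub_of_add_eq (sub_eq_iff_eq_add'.1 (by simpa using (hR.1 x).2)).symm

theorem apply_map (hR : IsResolventOf R 1 B dom) {x : X} (hx : x ∈ dom) : R (B x) = R x - x :=
  eq_sub_of_add_eq (sub_eq_iff_eq_add'.1 (by simpa using hR.2 x hx)).symm

theorem sub_one_pow_apply (hR : IsResolventOf R 1 B dom) {i : ℕ} {v : X}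
    (hv : ∀ j < i, (B ^ j) v ∈ dom) : ((R - 1) ^ i) v = (R ^ i) ((B ^ i) v) := by
  induction i with
  | zero => rfl
  | succ i ih =>
    have hcomm : Commute (R - 1) (R ^ i) :=
      ((Commute.refl R).sub_left (Commute.one_left R)).pow_right i
    calc ((R - 1) ^ (i + 1)) v = (R - 1) ((R ^ i) ((B ^ i) v)) := by
          rw [pow_succ', mul_apply_eq_comp, ih fun j hj => hv j (by omega)]
      _ = (R ^ i) (R (B ((B ^ i) v))) := by
          rw [← mul_apply_eq_comp, hcomm.eq, mul_apply_eq_comp,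
            hR.apply_map (hv i (by omega))]
          rfl
      _ = (R ^ (i + 1)) ((B ^ (i + 1)) v) := by
          rw [pow_succ, pow_succ', mul_apply_eq_comp, Module.End.mul_apply]

theorem norm_apply_le_add (hR : IsResolventOf R 1 B dom) (hT : IsC0Semigroup T N)
    (hG : IsGeneratorOf B dom T) {s : ℝ} (hs : 0 ≤ s) (x : X) :
    ‖R x‖ ≤ N * ‖x‖ * s + Real.exp (-s) * (N * ‖R x‖) := by
  set ψ : ℝ → X := fun t => Real.exp (-t) • T t (R x)
  have hderiv : ∀ t ∈ Set.Ico 0 s,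
      HasDerivWithinAt ψ (-(Real.exp (-t) • T t x)) (Set.Ici t) t := by
    intro t ht
    refine ((hasDerivAt_neg t).exp.hasDerivWithinAt.smul
      (hG.hasDerivWithinAt_orbit hT ((hR.1 x).1) ht.1)).congr_deriv ?_
    rw [hR.map_apply, map_sub, smul_sub, mul_neg_one, neg_smul]
    abel
  have hcont : ContinuousOn ψ (Set.Icc 0 s) :=
    (Real.continuous_exp.comp continuous_neg).continuousOn.smul
      ((hT.strong_cont (R x)).mono Set.Icc_subset_Ici_self)
  have hbound : ∀ t ∈ Set.Ico 0 s, ‖-(Real.exp (-t) • T t x)‖ ≤ N * ‖x‖ := by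
    intro t ht
    rw [norm_neg, norm_smul, Real.norm_of_nonneg (Real.exp_pos _).le]
    exact (mul_le_of_le_one_left (norm_nonneg _) (Real.exp_le_one_iff.2 (by linarith [ht.1]))).trans
      (hT.norm_apply_le ht.1 x)
  have hmvt := norm_image_sub_le_of_norm_deriv_right_le_segment hcont hderiv hbound s
    ⟨hs, le_rfl⟩
  have hψs : ‖ψ s‖ ≤ Real.exp (-s) * (N * ‖R x‖) := by
    rw [norm_smul, Real.norm_of_nonneg (Real.exp_pos _).le]
    exact mul_le_mul_of_nonneg_left (hT.norm_apply_le hs _) (Real.exp_pos _).le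
  have hψ0 : ψ 0 = R x := by simp [ψ, hT.map_zero]
  rw [sub_zero, norm_sub_rev] at hmvt
  calc ‖R x‖ = ‖ψ 0‖ := by rw [hψ0]
    _ ≤ ‖ψ s‖ + ‖ψ 0 - ψ s‖ := norm_le_norm_add_norm_sub' ..
    _ ≤ N * ‖x‖ * s + Real.exp (-s) * (N * ‖R x‖) := by linarith

theorem norm_le (hR : IsResolventOf R 1 B dom) (hT : IsC0Semigroup T N)
    (hG : IsGeneratorOf B dom T) : ‖R‖ ≤ 2 * N * Real.log (2 * N + 2) := by
  have hN := hT.bound_nonneg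
  have hs : 0 ≤ Real.log (2 * N + 2) := Real.log_nonneg (by linarith)
  have hexp : Real.exp (-Real.log (2 * N + 2)) = (2 * N + 2)⁻¹ := by
    rw [Real.exp_neg, Real.exp_log (by linarith)]
  refine ContinuousLinearMap.opNorm_le_bound _ (by positivity) fun x => ?_
  have h := hR.norm_apply_le_add hT hG hs x
  rw [hexp] at h
  have hhalf : (2 * N + 2)⁻¹ * (N * ‖R x‖) ≤ ‖R x‖ / 2 := by
    rw [inv_mul_le_iff₀ (by linarith)]
    nlinarith [norm_nonneg (R x)]
  linarith

end IsResolventOf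

end Semigroup

theorem stmt_9_general (q : ℕ) (N : ℝ) :
    ∃ C : ℝ, ∀ (X : Type) [NormedAddCommGroup X] [NormedSpace ℂ X] [CompleteSpace X],
      ∀ (T : ℝ → X →L[ℂ] X) (B : X →ₗ[ℂ] X) (dom : Set X) (R : X →L[ℂ] X),
        IsC0Semigroup T N → IsGeneratorOf B dom T → IsResolventOf R 1 B dom →
        ∀ v : X, (∀ i < q, (B ^ i) v ∈ dom) →
          ‖v - ∑ k ∈ Finset.Icc q (2 * q - 1), hCoef q k • (R ^ k) v‖ ≤ C * ‖(B ^ q) v‖ := by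
  obtain ⟨Q, hQ⟩ := sub_one_pow_dvd_one_sub_sum_hCoef q
  set M := 2 * N * Real.log (2 * N + 2)
  set K := ∑ j ∈ range (Q.natDegree + 1), ‖Q.coeff j‖ * M ^ j
  refine ⟨K * M ^ q, fun X _ _ _ T B dom R hT hG hR v hv => ?_⟩
  have hRM : ‖R‖ ≤ M := hR.norm_le hT hG
  have hQR : ‖aeval R Q‖ ≤ K := ContinuousLinearMap.norm_aeval_le hRM Q
  have hfactor : v - ∑ k ∈ Finset.Icc q (2 * q - 1), hCoef q k • (R ^ k) v =
      aeval R Q ((R ^ q) ((B ^ q) v)) := by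
    have h := congrArg (fun p => aeval R p v) hQ
    rw [← hR.sub_one_pow_apply hv]
    simpa [mul_comm _ Q] using h
  rw [hfactor]
  calc _ ≤ ‖aeval R Q‖ * (‖R ^ q‖ * ‖(B ^ q) v‖) :=
        (ContinuousLinearMap.le_opNorm _ _).trans
          (mul_le_mul_of_nonneg_left (ContinuousLinearMap.le_opNorm _ _) (norm_nonneg _))
    _ ≤ K * (M ^ q * ‖(B ^ q) v‖) := by
        gcongr
        · exact (norm_nonneg _).trans hQR
        · exact ContinuousLinearMap.norm_pow_le_of_norm_le hRM q
    _ = K * M ^ q * ‖(B ^ q) v‖ := (mul_assoc ..).symm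

/-- There is a constant `C(q,N)` depending only on `q` and `N` such that for every
generator `B` of a `C₀`-semigroup with bound `N` and all `v ∈ 𝒟(B^q)`:
`‖v - Σ_{k=q}^{2q-1} h_k^q (1-B)^{-k} v‖ ≤ C(q,N) ‖B^q v‖`. -/
theorem stmt_9 (q : ℕ) (hq : 1 ≤ q) (N : ℝ) :
    ∃ C : ℝ, ∀ (X : Type) [NormedAddCommGroup X] [NormedSpace ℂ X] [CompleteSpace X],
      ∀ (T : ℝ → X →L[ℂ] X) (B : X →ₗ[ℂ] X) (dom : Set X) (R : X →L[ℂ] X),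
        IsC0Semigroup T N → IsGeneratorOf B dom T → IsResolventOf R 1 B dom →
        ∀ v : X, (∀ i < q, (B ^ i) v ∈ dom) →
          ‖v - ∑ k ∈ Finset.Icc q (2 * q - 1), hCoef q k • (R ^ k) v‖ ≤ C * ‖(B ^ q) v‖ :=
  stmt_9_general q N
end

section
/- For the m-th Laguerre polynomial L_m(x) = Σ_{k=0}^m C(m,k) (-1)^k х^k / k!, and a generator A of a bounded C_0-semigroup with bound N on a Banach space, with γ > 0 and m ≥ 1: A^{m-1}(γ - A)^{-m} = ∫₀^∞ e^{sA} e^{-γs} (-1)^{m-1} L_{m-1}(γ s) ds. -/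
open Filter Topology MeasureTheory

/-- The `m`-th Laguerre polynomial `L_m(x) = Σ_{k=0}^m C(m,k) (-1)^k x^k / k!`. -/
noncomputable def laguerre (m : ℕ) (x : ℝ) : ℝ :=
  ∑ k ∈ Finset.range (m + 1), (m.choose k : ℝ) * (-1) ^ k * x ^ k / (Nat.factorial k : ℝ)

/-! The moments `Mₙ x = ∫₀^∞ sⁿ e^{-γs} T(s) x ds` satisfy
`Mₙ ((γ - A) x) = n M_{n-1} x + 0ⁿ x`: integrate the right derivative of `s ↦ sⁿ e^{-γs} T(s) x`
over `(0, ∞)`. Taking `x = R v` gives `Mₙ = n! R^{n+1}`. On the other side `A R = γR - 1`, and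
`γR - 1` commutes with `R`, so `A^n R^{n+1} = (γR - 1)^n R`; its binomial expansion matches,
term by term, the expansion of `e^{-γs} (-1)^n Lₙ(γs)` in the monomials `s^k e^{-γs}`. -/

open Set
open scoped Nat

theorem integral_Ioi_of_hasDerivWithinAt_Ioi_of_tendsto {E : Type*} [NormedAddCommGroup E]
    [NormedSpace ℝ E] [CompleteSpace E] {f f' : ℝ → E} {a : ℝ} {m : E}
    (hcont : ContinuousOn f (Ici a)) (hderiv : ∀ x ∈ Ioi a, HasDerivWithinAt f (f' x) (Ioi x) x)
    (f'int : IntegrableOn f' (Ioi a)) (hf : Tendsto f atTop (𝓝 m)) :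
    ∫ x in Ioi a, f' x = m - f a := by
  refine tendsto_nhds_unique (intervalIntegral_tendsto_integral_Ioi a f'int tendsto_id) ?_
  refine (hf.sub_const _).congr' ?_
  filter_upwards [Ioi_mem_atTop a] with x hx
  refine (intervalIntegral.integral_eq_sub_of_hasDeriv_right_of_le hx.le
    (hcont.mono Icc_subset_Ici_self) (fun y hy => hderiv y hy.1) ?_).symm
  exact (intervalIntegrable_iff_integrableOn_Ioc_of_le hx.le).2
    (f'int.mono_set Ioc_subset_Ioi_self)

theorem integrableOn_pow_mul_exp_neg_mul {γ : ℝ} (hγ : 0 < γ) (n : ℕ) :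
    IntegrableOn (fun s : ℝ => s ^ n * Real.exp (-γ * s)) (Ioi 0) := by
  refine (integrableOn_rpow_mul_exp_neg_mul_rpow (s := n) (p := 1)
    (by linarith [n.cast_nonneg (α := ℝ)]) one_pos hγ).congr_fun (fun s _ => ?_) measurableSet_Ioi
  simp [Real.rpow_natCast]

theorem tendsto_pow_mul_exp_neg_mul_atTop_nhds_zero {γ : ℝ} (hγ : 0 < γ) (n : ℕ) :
    Tendsto (fun s : ℝ => s ^ n * Real.exp (-γ * s)) atTop (𝓝 0) := by
  simpa [Real.rpow_natCast] using tendsto_rpow_mul_exp_neg_mul_atTop_nhds_zero (n : ℝ) γ hγ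

theorem hasDerivAt_pow_mul_exp_neg_mul (γ : ℝ) (n : ℕ) (s : ℝ) :
    HasDerivAt (fun u : ℝ => u ^ n * Real.exp (-γ * u))
      (n * s ^ (n - 1) * Real.exp (-γ * s) - γ * (s ^ n * Real.exp (-γ * s))) s := by
  have hexp : HasDerivAt (fun u : ℝ => Real.exp (-γ * u)) (Real.exp (-γ * s) * -γ) s := by
    simpa using ((hasDerivAt_id s).const_mul (-γ)).exp
  exact ((hasDerivAt_pow n s).mul hexp).congr_deriv (by ring)

namespace IsC0Semigroup

variable {X : Type*} [NormedAddCommGroup X] [NormedSpace ℂ X] {T : ℝ → X →L[ℂ] X} {N : ℝ}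

theorem norm_apply_le_s11 (hT : IsC0Semigroup T N) {t : ℝ} (ht : 0 ≤ t) (x : X) :
    ‖T t x‖ ≤ N * ‖x‖ :=
  (T t).le_of_opNorm_le (hT.norm_bound t ht) x

theorem integrableOn_smul_apply (hT : IsC0Semigroup T N) {g : ℝ → ℝ}
    (hg : IntegrableOn g (Ioi 0)) (x : X) : IntegrableOn (fun s => g s • T s x) (Ioi 0) := by
  refine hg.smul_bdd (N * ‖x‖)
    (((hT.strong_cont x).mono Ioi_subset_Ici_self).aestronglyMeasurable measurableSet_Ioi) ?_
  filter_upwards [self_mem_ae_restrict measurableSet_Ioi] with s hs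
  exact hT.norm_apply_le_s11 (le_of_lt hs) x

theorem tendsto_smul_apply_atTop (hT : IsC0Semigroup T N) {g : ℝ → ℝ}
    (hg : Tendsto g atTop (𝓝 0)) (x : X) : Tendsto (fun s => g s • T s x) atTop (𝓝 0) :=
  hg.zero_smul_isBoundedUnder_le ⟨N * ‖x‖, eventually_map.2 <|
    (eventually_ge_atTop 0).mono fun _ hs => hT.norm_apply_le_s11 hs x⟩

theorem hasDerivWithinAt_apply (hT : IsC0Semigroup T N) {A : X →ₗ[ℂ] X} {dom : Set X}
    (hA : IsGeneratorOf A dom T) {x : X} (hx : x ∈ dom) {s : ℝ} (hs : 0 ≤ s) :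
    HasDerivWithinAt (fun u => T u x) (T s (A x)) (Ioi s) s := by
  rw [hasDerivWithinAt_iff_tendsto_slope, sdiff_singleton_eq_self self_notMem_Ioi]
  have hshift : Tendsto (fun u : ℝ => u - s) (𝓝[>] s) (𝓝[>] 0) := by
    refine tendsto_nhdsWithin_iff.2
      ⟨?_, eventually_nhdsWithin_of_forall fun _ hu => mem_Ioi.2 (sub_pos.2 hu)⟩
    exact ((continuous_sub_right s).tendsto' s 0 (sub_self s)).mono_left nhdsWithin_le_nhds
  have hgen : Tendsto (fun t : ℝ => t⁻¹ • (T t x - x)) (𝓝[>] 0) (𝓝 (A x)) := by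
    simpa only [← Complex.coe_smul, Complex.ofReal_inv] using hA.deriv_mem x hx
  refine (((T s).continuous.tendsto _).comp (hgen.comp hshift)).congr' ?_
  filter_upwards [self_mem_nhdsWithin] with u hu
  have hTu : T u x = T s (T (u - s) x) := by
    rw [← ContinuousLinearMap.comp_apply, ← hT.map_add s _ hs (sub_pos.2 hu).le, add_sub_cancel]
  simp [slope_def_module, hTu, ← map_sub, ← ContinuousLinearMap.map_smul_of_tower]

end IsC0Semigroup

open Polynomial in
theorem smul_sub_one_pow_eq_sum {𝕜 B : Type*} [CommRing 𝕜] [Ring B] [Algebra 𝕜 B] (μ : 𝕜)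
    (r : B) (n : ℕ) :
    (μ • r - 1) ^ n =
      ∑ k ∈ Finset.range (n + 1), ((-1) ^ (k + n) * μ ^ k * n.choose k : 𝕜) • r ^ k := by
  have hpoly : (C μ * X - 1) ^ n =
      ∑ k ∈ Finset.range (n + 1), C ((-1) ^ (k + n) * μ ^ k * n.choose k) * X ^ k := by
    rw [sub_pow]
    refine Finset.sum_congr rfl fun k _ => ?_
    simp only [map_mul, map_pow, map_neg, map_one, map_natCast]
    ring
  simpa [Algebra.smul_def] using congrArg (aeval r) hpoly

namespace IsResolventOf

variable {X : Type*} [NormedAddCommGroup X] [NormedSpace ℂ X] {R : X →L[ℂ] X} {μ : ℂ}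
  {A : X →ₗ[ℂ] X} {dom : Set X}

theorem apply_apply (hR : IsResolventOf R μ A dom) (y : X) : A (R y) = (μ • R - 1) y := by
  have := (hR.1 y).2
  simp only [sub_apply, smul_apply, one_apply_eq_self]
  linear_combination (norm := module) -this

theorem pow_apply_pow_succ (hR : IsResolventOf R μ A dom) (n : ℕ) (v : X) :
    (A ^ n) ((R ^ (n + 1)) v) = ((μ • R - 1) ^ n * R) v := by
  induction n generalizing v with
  | zero => simp
  | succ n ih =>
    have hcomm : Commute (μ • R - 1) R :=
      ((Commute.refl R).smul_left μ).sub_left (Commute.one_left R)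
    calc (A ^ (n + 1)) ((R ^ (n + 1 + 1)) v) = (A ^ n) (A (R ((R ^ (n + 1)) v))) := by
          rw [pow_succ, Module.End.mul_apply, pow_succ', mul_apply_eq_comp]
      _ = (A ^ n) ((R ^ (n + 1)) ((μ • R - 1) v)) := by
          rw [hR.apply_apply, ← mul_apply_eq_comp, ← mul_apply_eq_comp, (hcomm.pow_right _).eq]
      _ = ((μ • R - 1) ^ (n + 1) * R) v := by
          rw [ih, ← mul_apply_eq_comp, mul_assoc, ← hcomm.eq, ← mul_assoc, ← pow_succ]

end IsResolventOf

theorem exp_mul_neg_one_pow_mul_laguerre_eq_sum (n : ℕ) (γ s : ℝ) :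
    Real.exp (-γ * s) * (-1) ^ n * laguerre n (γ * s) =
      ∑ k ∈ Finset.range (n + 1),
        ((-1) ^ (k + n) * γ ^ k * n.choose k / k ! : ℝ) * (s ^ k * Real.exp (-γ * s)) := by
  rw [laguerre, Finset.mul_sum]
  refine Finset.sum_congr rfl fun k _ => ?_
  ring

section LaplaceMoment

variable {X : Type*} [NormedAddCommGroup X] [NormedSpace ℂ X]

noncomputable def laplaceMoment (T : ℝ → X →L[ℂ] X) (γ : ℝ) (n : ℕ) (x : X) : X :=
  ∫ s in Ioi (0 : ℝ), (s ^ n * Real.exp (-γ * s)) • T s x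

theorem integral_laguerre_smul_eq_sum_laplaceMoment {T : ℝ → X →L[ℂ] X} {N : ℝ}
    (hT : IsC0Semigroup T N) {γ : ℝ} (hγ : 0 < γ) (n : ℕ) (v : X) :
    ∫ s in Ioi (0 : ℝ), ((Real.exp (-γ * s) * (-1) ^ n * laguerre n (γ * s) : ℝ) : ℂ) • T s v =
      ∑ k ∈ Finset.range (n + 1), ((-1) ^ (k + n) * γ ^ k * n.choose k / k ! : ℝ) •
        laplaceMoment T γ k v := by
  simp_rw [Complex.coe_smul, exp_mul_neg_one_pow_mul_laguerre_eq_sum, Finset.sum_smul]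
  rw [integral_finsetSum _ fun k _ => hT.integrableOn_smul_apply
    ((integrableOn_pow_mul_exp_neg_mul hγ k).const_mul _) v]
  refine Finset.sum_congr rfl fun k _ => ?_
  rw [laplaceMoment, ← integral_smul]
  simp_rw [smul_smul]

variable [CompleteSpace X] {T : ℝ → X →L[ℂ] X} {N : ℝ} {A : X →ₗ[ℂ] X} {dom : Set X} {γ : ℝ}

theorem laplaceMoment_sub_generator (hT : IsC0Semigroup T N) (hA : IsGeneratorOf A dom T)
    (hγ : 0 < γ) (n : ℕ) {x : X} (hx : x ∈ dom) :
    laplaceMoment T γ n ((γ : ℂ) • x - A x) =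
      (n : ℝ) • laplaceMoment T γ (n - 1) x + (0 : ℝ) ^ n • x := by
  have hint : ∀ k (y : X),
      IntegrableOn (fun s : ℝ => (s ^ k * Real.exp (-γ * s)) • T s y) (Ioi 0) :=
    fun k y => hT.integrableOn_smul_apply (integrableOn_pow_mul_exp_neg_mul hγ k) y
  have hderiv : ∀ s ∈ Ioi (0 : ℝ), HasDerivWithinAt
      (fun u : ℝ => (u ^ n * Real.exp (-γ * u)) • T u x)
      ((n : ℝ) • ((s ^ (n - 1) * Real.exp (-γ * s)) • T s x) -
        (s ^ n * Real.exp (-γ * s)) • T s ((γ : ℂ) • x - A x)) (Ioi s) s := by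
    intro s hs
    refine ((hasDerivAt_pow_mul_exp_neg_mul γ n s).hasDerivWithinAt.smul
      (hT.hasDerivWithinAt_apply hA hx (le_of_lt hs))).congr_deriv ?_
    simp only [map_sub, map_smul, ← Complex.coe_smul]
    module
  have hint₁ : IntegrableOn
      (fun s : ℝ => (n : ℝ) • ((s ^ (n - 1) * Real.exp (-γ * s)) • T s x)) (Ioi 0) :=
    (hint (n - 1) x).smul (n : ℝ)
  have hIBP := integral_Ioi_of_hasDerivWithinAt_Ioi_of_tendsto
    (f := fun u : ℝ => (u ^ n * Real.exp (-γ * u)) • T u x)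
    (((continuous_pow n).mul (by fun_prop)).continuousOn.smul (hT.strong_cont x)) hderiv
    (hint₁.sub (hint n _))
    (hT.tendsto_smul_apply_atTop (tendsto_pow_mul_exp_neg_mul_atTop_nhds_zero hγ n) x)
  rw [integral_sub hint₁ (hint n _), integral_smul] at hIBP
  simp only [hT.map_zero, mul_zero, Real.exp_zero, mul_one, one_apply_eq_self] at hIBP
  unfold laplaceMoment
  linear_combination (norm := module) -hIBP

theorem laplaceMoment_eq_factorial_smul_resolvent_pow {R : X →L[ℂ] X}
    (hT : IsC0Semigroup T N) (hA : IsGeneratorOf A dom T) (hγ : 0 < γ)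
    (hR : IsResolventOf R (γ : ℂ) A dom) (n : ℕ) (v : X) :
    laplaceMoment T γ n v = (n ! : ℝ) • (R ^ (n + 1)) v := by
  induction n generalizing v with
  | zero =>
    have h := laplaceMoment_sub_generator hT hA hγ 0 (hR.1 v).1
    rw [(hR.1 v).2, CharP.cast_eq_zero, zero_smul, zero_add, pow_zero, one_smul] at h
    simpa using h
  | succ n ih =>
    have h := laplaceMoment_sub_generator hT hA hγ (n + 1) (hR.1 v).1
    rw [(hR.1 v).2, Nat.add_sub_cancel, ih, zero_pow n.succ_ne_zero, zero_smul, add_zero,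
      smul_smul] at h
    rw [h, pow_succ _ (n + 1), mul_apply_eq_comp, Nat.factorial_succ, Nat.cast_mul]

end LaplaceMoment

/-- `A^{m-1}(γ - A)^{-m} = ∫₀^∞ e^{sA} e^{-γs} (-1)^{m-1} L_{m-1}(γ s) ds`
(strongly). -/
theorem stmt_11 {X : Type*} [NormedAddCommGroup X] [NormedSpace ℂ X] [CompleteSpace X]
    (T : ℝ → X →L[ℂ] X) (N : ℝ) (hT : IsC0Semigroup T N)
    (A : X →ₗ[ℂ] X) (dom : Set X) (hA : IsGeneratorOf A dom T)
    (γ : ℝ) (hγ : 0 < γ) (m : ℕ) (hm : 1 ≤ m)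
    (R : X →L[ℂ] X) (hR : IsResolventOf R (γ : ℂ) A dom) :
    ∀ v : X, (A ^ (m - 1)) ((R ^ m) v) =
      ∫ s in Set.Ioi (0 : ℝ),
        ((Real.exp (-γ * s) * (-1) ^ (m - 1) * laguerre (m - 1) (γ * s) : ℝ) : ℂ) • T s v := by
  intro v
  obtain ⟨n, rfl⟩ := Nat.exists_eq_add_of_le' hm
  rw [Nat.add_sub_cancel, integral_laguerre_smul_eq_sum_laplaceMoment hT hγ, hR.pow_apply_pow_succ,
    smul_sub_one_pow_eq_sum, Finset.sum_mul, sum_apply]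
  refine Finset.sum_congr rfl fun k _ => ?_
  rw [laplaceMoment_eq_factorial_smul_resolvent_pow hT hA hγ hR, smul_smul,
    div_mul_cancel₀ _ (Nat.cast_ne_zero.2 k.factorial_ne_zero), ← Complex.coe_smul]
  push_cast
  rfl
end
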